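/- Suppose f : ℝ^d → ℝ^d satisfies ‖f(x)‖ = λ·exp(|x_d| - 1) whenever |x_d| ≥ 1, where λ ≥ 1. Let x, y with ‖p(f^k(x)) - p(f^k(y))‖ ≤ 2√(d-1) for all k (where p projects to the first d-1 coordinates), and suppose all iterates have last coordinate of absolute value at least 1. Then there exists M > 0 (depending only on d and λ) such that: if |y_d^k| > |x_d^k| + M for some k (where x^k = f^k(x), y^k = f^k(y)), then |y_d^{k+1}| > (λ/3)·exp(|y_d^k|) + M ≥ 5|x_d^{k+1}| + M. -/

import Mathlib

/-!
The map blows up the last coordinate exponentially, while the projections of the two orbits stay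
within `K = 2√(d-1)` of each other. If `|y_d| > |x_d| + M`, then `‖f y‖ = λ e^{|y_d|-1}` exceeds
`‖f x‖ = λ e^{|x_d|-1}` by a factor `e^M`, so `‖p(f y)‖ ≤ ‖f x‖ + K` is a negligible part of
`‖f y‖` and almost all of the norm of `f y` sits in its last coordinate:
`|(f y)_d| ≥ ‖f y‖ - ‖f x‖ - K`. Since `e/3 < 1`, this beats `(λ/3) e^{|y_d|} = (e/3) ‖f y‖` by more
than `M` once `e^M` dominates `1 + K + M`, which holds for `M = d + 8`.
-/

open Real

/-- Projection of ℝ^d onto the first d-1 coordinates. -/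
def proj {d : ℕ} (hd : 2 ≤ d) (x : EuclideanSpace ℝ (Fin d)) :
    EuclideanSpace ℝ (Fin (d - 1)) :=
  WithLp.toLp 2 (fun i : Fin (d - 1) => x ⟨(i : ℕ), by omega⟩)

section LastCoordinate

variable {d : ℕ} (hd : 2 ≤ d)

def lastCoord (w : EuclideanSpace ℝ (Fin d)) : ℝ :=
  w ⟨d - 1, Nat.sub_one_lt_of_lt hd⟩

lemma norm_sq_eq_norm_proj_sq_add_sq (w : EuclideanSpace ℝ (Fin d)) :
    ‖w‖ ^ 2 = ‖proj hd w‖ ^ 2 + lastCoord hd w ^ 2 := by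
  obtain ⟨n, rfl⟩ : ∃ n, d = n + 1 := ⟨d - 1, by omega⟩
  rw [EuclideanSpace.norm_eq, EuclideanSpace.norm_eq, sq_sqrt (by positivity),
    sq_sqrt (by positivity), Fin.sum_univ_castSucc]
  simp only [norm_eq_abs, sq_abs, Fin.last, Nat.add_one_sub_one, proj]
  rfl

lemma norm_proj_le_norm (w : EuclideanSpace ℝ (Fin d)) : ‖proj hd w‖ ≤ ‖w‖ :=
  (pow_le_pow_iff_left₀ (norm_nonneg _) (norm_nonneg _) two_ne_zero).1 <| by
    nlinarith [norm_sq_eq_norm_proj_sq_add_sq hd w, sq_nonneg (lastCoord hd w)]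

lemma norm_sub_norm_proj_le_abs_last (w : EuclideanSpace ℝ (Fin d)) :
    ‖w‖ - ‖proj hd w‖ ≤ |lastCoord hd w| := by
  have hsq : ‖w‖ ^ 2 ≤ (‖proj hd w‖ + |lastCoord hd w|) ^ 2 := by
    nlinarith [norm_sq_eq_norm_proj_sq_add_sq hd w, sq_abs (lastCoord hd w),
      norm_nonneg (proj hd w), abs_nonneg (lastCoord hd w)]
  have := abs_le_of_sq_le_sq' hsq (by positivity)
  linarith [this.2]

end LastCoordinate

lemma margin_of_exp_dominates {K M r R : ℝ} (hK : 0 ≤ K) (hM : 0 ≤ M)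
    (hKM : 11 * (1 + K + M) < exp M) (hr : 0 ≤ r) (hR : exp M ≤ R) (hrR : exp M * r ≤ R) :
    r + K + M < (1 - exp 1 / 3) * R ∧ 15 * r ≤ exp 1 * R := by
  have he : exp 1 < 30 / 11 := exp_one_lt_d9.trans (by norm_num)
  have he2 : 2 ≤ exp 1 := by linarith [add_one_le_exp 1]
  have hE : 0 < exp M := exp_pos M
  constructor
  · have : 11 * (r + K + M) * exp M < R * exp M := by nlinarith
    nlinarith [lt_of_mul_lt_mul_right this hE.le]
  · nlinarith

lemma exp_add_eight_dominates {t : ℝ} (ht : 1 ≤ t) :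
    11 * (1 + 2 * √(t - 1) + (t + 8)) < exp (t + 8) := by
  have hsqrt : 2 * √(t - 1) ≤ t := by
    nlinarith [sq_sqrt (show 0 ≤ t - 1 by linarith), sq_nonneg (√(t - 1) - 1)]
  have hexp8 : (2 : ℝ) ^ 8 ≤ exp 8 := by
    rw [show (8 : ℝ) = (8 : ℕ) by norm_num, ← exp_one_pow]
    gcongr
    linarith [add_one_le_exp 1]
  rw [exp_add]
  nlinarith [add_one_le_exp t]

section Growth

variable {d : ℕ} (hd : 2 ≤ d) {f : EuclideanSpace ℝ (Fin d) → EuclideanSpace ℝ (Fin d)}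
  {lam K M : ℝ}

theorem growth_step (hlam : 1 ≤ lam)
    (hf : ∀ z : EuclideanSpace ℝ (Fin d), 1 ≤ |lastCoord hd z| →
      ‖f z‖ = lam * exp (|lastCoord hd z| - 1))
    (hM : 0 ≤ M) (hKM : 11 * (1 + K + M) < exp M) {u v : EuclideanSpace ℝ (Fin d)}
    (hu : 1 ≤ |lastCoord hd u|) (hv : 1 ≤ |lastCoord hd v|)
    (hproj : ‖proj hd (f u) - proj hd (f v)‖ ≤ K)
    (huv : |lastCoord hd v| > |lastCoord hd u| + M) :
    |lastCoord hd (f v)| > lam / 3 * exp |lastCoord hd v| + M ∧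
      lam / 3 * exp |lastCoord hd v| + M ≥ 5 * |lastCoord hd (f u)| + M := by
  set a := |lastCoord hd u|
  set b := |lastCoord hd v|
  have hfu := hf u hu
  have hfv := hf v hv
  have hR : exp M ≤ lam * exp (b - 1) := by
    nlinarith [exp_le_exp.2 (show M ≤ b - 1 by linarith), exp_pos (b - 1)]
  have hrR : exp M * (lam * exp (a - 1)) ≤ lam * exp (b - 1) := by
    rw [mul_left_comm, ← exp_add]
    gcongr
    linarith
  obtain ⟨hmargin, hfive⟩ := margin_of_exp_dominates ((norm_nonneg _).trans hproj) hM hKM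
    (by positivity) hR hrR
  have hproj_v : ‖proj hd (f v)‖ ≤ lam * exp (a - 1) + K := by
    have := norm_sub_norm_le (proj hd (f v)) (proj hd (f u))
    rw [norm_sub_rev] at this
    linarith [norm_proj_le_norm hd (f u)]
  have hlast_v := norm_sub_norm_proj_le_abs_last hd (f v)
  have hlast_u : |lastCoord hd (f u)| ≤ ‖f u‖ := PiLp.norm_apply_le (f u) _
  have hexp_b : lam / 3 * exp b = exp 1 / 3 * (lam * exp (b - 1)) := by
    rw [show b = 1 + (b - 1) by ring, exp_add]
    ring_nf
  constructor <;> linarith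

end Growth

theorem growth_lemma {d : ℕ} (hd : 2 ≤ d) (lam : ℝ) (hlam : 1 ≤ lam) :
    ∃ M : ℝ, 0 < M ∧
      ∀ f : EuclideanSpace ℝ (Fin d) → EuclideanSpace ℝ (Fin d),
        (∀ z : EuclideanSpace ℝ (Fin d), 1 ≤ |z ⟨d - 1, by omega⟩| →
          ‖f z‖ = lam * exp (|z ⟨d - 1, by omega⟩| - 1)) →
        ∀ x y : EuclideanSpace ℝ (Fin d),
          (∀ k : ℕ, ‖proj hd (f^[k] x) - proj hd (f^[k] y)‖ ≤ 2 * Real.sqrt (d - 1)) →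
          (∀ k : ℕ, 1 ≤ |(f^[k] x) ⟨d - 1, by omega⟩| ∧ 1 ≤ |(f^[k] y) ⟨d - 1, by omega⟩|) →
          ∀ k : ℕ,
            |(f^[k] y) ⟨d - 1, by omega⟩| > |(f^[k] x) ⟨d - 1, by omega⟩| + M →
            |(f^[k+1] y) ⟨d - 1, by omega⟩|
                > lam / 3 * exp |(f^[k] y) ⟨d - 1, by omega⟩| + M ∧
            lam / 3 * exp |(f^[k] y) ⟨d - 1, by omega⟩| + M
                ≥ 5 * |(f^[k+1] x) ⟨d - 1, by omega⟩| + M := by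
  have hd1 : (1 : ℝ) ≤ d := by exact_mod_cast (by omega : 1 ≤ d)
  refine ⟨d + 8, by positivity, fun f hf x y hproj hone k hk => ?_⟩
  rw [Function.iterate_succ_apply', Function.iterate_succ_apply']
  refine growth_step hd hlam hf (by positivity) (exp_add_eight_dominates hd1)
    (hone k).1 (hone k).2 ?_ hk
  simpa only [← Function.iterate_succ_apply'] using hproj (k + 1)
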